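/- arXiv:2403.02207 — 7 statements merged into one kernel-verified Lean document; each statement's English description precedes it below -/
import Mathlib

section
/- Let H be a separable complex Hilbert space and let A be a bounded anti-linear operator on H. Let |A| be the unique positive bounded linear operator on H with |A|² = A^# A, i.e. ⟨|A|² x, y⟩ = ⟨A y, A x⟩ for all x, y ∈ H. Then there exists a unique anti-linear partial isometry J on H (an anti-linear map that is isometric on (ker J)ᗮ and vanishes on ker J) such that A = J ∘ |A| and ker J = ker A. -/
open scoped InnerProductSpace
open ContinuousLinearMap TopologicalSpace

/-- A conjugation on a complex Hilbert space: an anti-linear, involutive map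
satisfying `⟪C x, C y⟫ = ⟪y, x⟫`. -/
def Conjugation {K : Type*} [NormedAddCommGroup K] [InnerProductSpace ℂ K] (C : K → K) : Prop :=
  (∀ (a : ℂ) (x y : K), C (a • x + y) = (starRingEnd ℂ) a • C x + C y) ∧
  (∀ x, C (C x) = x) ∧
  (∀ x y : K, ⟪C x, C y⟫_ℂ = ⟪y, x⟫_ℂ)

/-- `T` is `C`-normal: `C T*T C = T T*` (pointwise). -/
def CNormal {K : Type*} [NormedAddCommGroup K] [InnerProductSpace ℂ K] [CompleteSpace K]
    (C : K → K) (T : K →L[ℂ] K) : Prop :=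
  ∀ x, C (adjoint T (T (C x))) = T (adjoint T x)

/-!
Since `⟪P² x, x⟫ = ‖A x‖²`, we have `‖A x‖ = ‖P x‖`, so `P x ↦ A x` is a well-defined anti-linear
isometry on `range P`. It extends by continuity to the closure of `range P` and by zero on
`(range P)ᗮ = ker P = ker A`; this is `J`. Any other candidate `J'` factors through the projection
onto `(ker J')ᗮ`, hence is continuous, and it agrees with `J` on `range P` and on `(range P)ᗮ`,
so `J' = J`.
-/

open Submodule LinearMap

namespace LinearMap

variable {R R₂ M M₂ : Type*} [Semiring R] [Semiring R₂] {σ : R →+* R₂}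
  [AddCommMonoid M] [Module R M] [AddCommGroup M₂] [Module R₂ M₂]

def ofMapSMulAdd (f : M → M₂) (h : ∀ (a : R) (x y : M), f (a • x + y) = σ a • f x + f y) :
    M →ₛₗ[σ] M₂ where
  toFun := f
  map_add' x y := by simpa using h 1 x y
  map_smul' a x := by
    have hf0 : f 0 = 0 := by simpa using h 1 0 0
    simpa [hf0] using h a x 0

end LinearMap

section InnerSelf

variable {𝕜 E F : Type*} [RCLike 𝕜] [NormedAddCommGroup E] [InnerProductSpace 𝕜 E]
  [NormedAddCommGroup F] [InnerProductSpace 𝕜 F]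

theorem norm_eq_norm_of_inner_self_eq {x : E} {y : F} (h : ⟪x, x⟫_𝕜 = ⟪y, y⟫_𝕜) :
    ‖x‖ = ‖y‖ := by
  rw [inner_self_eq_norm_sq_to_K, inner_self_eq_norm_sq_to_K] at h
  exact (pow_left_inj₀ (norm_nonneg _) (norm_nonneg _) two_ne_zero).1 (by exact_mod_cast h)

theorem LinearMap.IsSymmetric.norm_apply_eq {P : E →ₗ[𝕜] E} (hP : P.IsSymmetric) {A : E → F}
    {x : E} (h : ⟪P (P x), x⟫_𝕜 = ⟪A x, A x⟫_𝕜) : ‖A x‖ = ‖P x‖ :=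
  norm_eq_norm_of_inner_self_eq (by rw [← h, hP])

end InnerSelf

section PartialIsometry

variable {𝕜 E F G : Type*} [RCLike 𝕜] {σ : 𝕜 →+* 𝕜} [AddCommGroup E] [Module 𝕜 E]
  [NormedAddCommGroup F] [NormedSpace 𝕜 F] [NormedAddCommGroup G] [InnerProductSpace 𝕜 G]

namespace LinearIsometry

variable {K : Submodule 𝕜 G} [K.HasOrthogonalProjection] (W : K →ₛₗᵢ[σ] F)

noncomputable def extendByZero : G →SL[σ] F :=
  W.toContinuousLinearMap.comp K.orthogonalProjectionOnto

theorem extendByZero_apply_coe (y : K) : W.extendByZero y = W y := by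
  simp [extendByZero, orthogonalProjectionOnto_mem_subspace_eq_self]

theorem ker_extendByZero : W.extendByZero.ker = Kᗮ := by
  ext y
  change W (K.orthogonalProjectionOnto y) = 0 ↔ _
  rw [← norm_eq_zero, W.norm_map, norm_eq_zero, orthogonalProjectionOnto_eq_zero_iff]

theorem norm_extendByZero_apply_of_mem {y : G} (hy : y ∈ K) : ‖W.extendByZero y‖ = ‖y‖ := by
  simpa using congrArg norm (W.extendByZero_apply_coe ⟨y, hy⟩)

end LinearIsometry

theorem LinearMap.exists_linearIsometry_topologicalClosure_range [CompleteSpace F]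
    {T : E →ₛₗ[σ] F} {S : E →ₗ[𝕜] G} (h : ∀ x, ‖T x‖ = ‖S x‖) :
    ∃ W : (range S).topologicalClosure →ₛₗᵢ[σ] F,
      ∀ x, W ⟨S x, le_topologicalClosure _ (mem_range_self S x)⟩ = T x := by
  set K := (range S).topologicalClosure
  let e : E →ₗ[𝕜] K := S.codRestrict K fun x => le_topologicalClosure _ (mem_range_self S x)
  have he : DenseRange e := by
    refine Topology.IsInducing.subtypeVal.dense_iff.2 fun z => ?_
    rw [← Set.range_comp]
    exact (range S).topologicalClosure_coe ▸ z.2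
  have hbound : ∃ C, ∀ x, ‖T x‖ ≤ C * ‖e x‖ := ⟨1, fun x => by rw [one_mul, h]; rfl⟩
  refine ⟨⟨T.extendOfNorm e, fun z => ?_⟩, T.extendOfNorm_eq he hbound⟩
  refine he.induction_on z (isClosed_eq (by fun_prop) continuous_norm) fun x => ?_
  rw [ContinuousLinearMap.coe_coe, T.extendOfNorm_eq he hbound, h]
  rfl

variable [CompleteSpace G]

theorem LinearMap.norm_apply_le_of_norm_eq_on_orthogonal_ker (J : G →ₛₗ[σ] F)
    (hker : IsClosed (ker J : Set G)) (hJ : ∀ y ∈ (ker J)ᗮ, ‖J y‖ = ‖y‖) (x : G) :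
    ‖J x‖ ≤ ‖x‖ := by
  have : CompleteSpace (ker J) := hker.completeSpace_coe
  have hx : J x = J ((ker J)ᗮ.starProjection x) := by
    conv_lhs => rw [← (ker J).starProjection_add_starProjection_orthogonal x]
    rw [map_add, mem_ker.1 ((ker J).starProjection_apply_mem x), zero_add]
  rw [hx, hJ _ (starProjection_apply_mem _ x)]
  exact norm_starProjection_apply_le _ x

theorem ContinuousLinearMap.eq_of_apply_eq_of_orthogonal_range_le_ker {S : E →ₗ[𝕜] G}
    {J₁ J₂ : G →SL[σ] F} (h : ∀ x, J₁ (S x) = J₂ (S x)) (h₁ : (range S)ᗮ ≤ J₁.ker)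
    (h₂ : (range S)ᗮ ≤ J₂.ker) : J₁ = J₂ := by
  set K := (range S).topologicalClosure
  have hK : K ≤ (J₁ - J₂).ker := by
    refine topologicalClosure_minimal _ ?_ (J₁ - J₂).isClosed_ker
    rintro _ ⟨x, rfl⟩
    simp [h x]
  have hKperp : Kᗮ ≤ (J₁ - J₂).ker := by
    intro y hy
    rw [orthogonal_closure] at hy
    exact sub_eq_zero.2 ((mem_ker.1 (h₁ hy)).trans (mem_ker.1 (h₂ hy)).symm)
  have htop := sup_le hK hKperp
  rw [sup_orthogonal_of_hasOrthogonalProjection] at htop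
  ext x
  exact sub_eq_zero.1 (htop (mem_top (x := x)))

end PartialIsometry

theorem stmt_2_general {H : Type*} [NormedAddCommGroup H] [InnerProductSpace ℂ H] [CompleteSpace H]
    (A : H →SL[starRingEnd ℂ] H) (P : H →L[ℂ] H)
    (hP : P.IsPositive)
    (hPsq : ∀ x y : H, ⟪(P * P) x, y⟫_ℂ = ⟪A y, A x⟫_ℂ) :
    ∃! J : H → H,
      (∀ (a : ℂ) (x y : H), J (a • x + y) = (starRingEnd ℂ) a • J x + J y) ∧
      (∀ x : H, (∀ y : H, J y = 0 → ⟪x, y⟫_ℂ = 0) → ‖J x‖ = ‖x‖) ∧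
      (∀ x, A x = J (P x)) ∧
      {x : H | J x = 0} = {x : H | A x = 0} := by
  have hnorm (x : H) : ‖A x‖ = ‖P x‖ := hP.isSymmetric.norm_apply_eq (hPsq x x)
  have hker : (range (P : H →ₗ[ℂ] H))ᗮ = A.ker := by
    rw [hP.isSymmetric.orthogonal_range]
    ext x
    rw [mem_ker, mem_ker, ContinuousLinearMap.coe_coe, ContinuousLinearMap.coe_coe,
      ← norm_eq_zero, ← hnorm, norm_eq_zero]
  obtain ⟨W, hW⟩ := exists_linearIsometry_topologicalClosure_range (T := A.toLinearMap)
    (S := P.toLinearMap) hnorm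
  have hJker : W.extendByZero.ker = A.ker := by
    rw [W.ker_extendByZero, orthogonal_closure, hker]
  have hJP (x : H) : W.extendByZero (P x) = A x := (W.extendByZero_apply_coe _).trans (hW x)
  refine ⟨W.extendByZero, ⟨fun a x y => by simp, fun x hx => ?_, fun x => (hJP x).symm,
    Set.ext fun x => SetLike.ext_iff.1 hJker x⟩, ?_⟩
  · have hxK : x ∈ W.extendByZero.kerᗮ := (mem_orthogonal' _ _).2 hx
    rw [LinearIsometry.ker_extendByZero, orthogonal_orthogonal] at hxK
    exact W.norm_extendByZero_apply_of_mem hxK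
  · rintro J' ⟨hJ'smul, hJ'iso, hJ'P, hJ'ker⟩
    let L := LinearMap.ofMapSMulAdd J' hJ'smul
    have hLker : L.ker = A.ker := SetLike.ext fun x => Set.ext_iff.1 hJ'ker x
    have hLiso : ∀ y ∈ L.kerᗮ, ‖L y‖ = ‖y‖ := fun y hy => hJ'iso y ((mem_orthogonal' _ _).1 hy)
    have hL := L.norm_apply_le_of_norm_eq_on_orthogonal_ker (hLker ▸ A.isClosed_ker) hLiso
    have hJ'J := ContinuousLinearMap.eq_of_apply_eq_of_orthogonal_range_le_ker
      (J₁ := L.mkContinuous 1 fun x => by rw [one_mul]; exact hL x) (J₂ := W.extendByZero)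
      (fun x => (hJ'P x).symm.trans (hJP x).symm) (hker.trans_le hLker.ge)
      (by rw [LinearIsometry.ker_extendByZero, orthogonal_closure])
    exact congrArg DFunLike.coe hJ'J

/-- Polar decomposition of a bounded anti-linear operator `A`: if `P = |A|` is the
positive operator with `⟪P² x, y⟫ = ⟪A y, A x⟫`, then there is a unique anti-linear
partial isometry `J` with `A = J ∘ P` and `ker J = ker A`. -/
theorem stmt_2 {H : Type*} [NormedAddCommGroup H] [InnerProductSpace ℂ H] [CompleteSpace H]
    [SeparableSpace H]
    (A : H →SL[starRingEnd ℂ] H) (P : H →L[ℂ] H)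
    (hP : P.IsPositive)
    (hPsq : ∀ x y : H, ⟪(P * P) x, y⟫_ℂ = ⟪A y, A x⟫_ℂ) :
    ∃! J : H → H,
      (∀ (a : ℂ) (x y : H), J (a • x + y) = (starRingEnd ℂ) a • J x + J y) ∧
      (∀ x : H, (∀ y : H, J y = 0 → ⟪x, y⟫_ℂ = 0) → ‖J x‖ = ‖x‖) ∧
      (∀ x, A x = J (P x)) ∧
      {x : H | J x = 0} = {x : H | A x = 0} :=
  stmt_2_general A P hP hPsq
end

section
/- Let H be a separable complex Hilbert space, C a conjugation on H, and T a C-normal bounded linear operator on H. Then S₁ = T*T − TT* is C-skew-symmetric (i.e. C S₁* C = −S₁) and S₂ = T*T + TT* is C-symmetric (i.e. S₂* = C S₂ C). -/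
open scoped InnerProductSpace
open ContinuousLinearMap TopologicalSpace

/-! Both `T*T - TT*` and `T*T + TT*` are self-adjoint, and since `C` is an involution, `C`-normality
`C T*T C = TT*` also gives `C TT* C = T*T`: conjugation by `C` swaps the two summands, which
negates their difference and fixes their sum. -/

section

variable {K : Type*} [NormedAddCommGroup K] [InnerProductSpace ℂ K]

theorem Conjugation.map_add {C : K → K} (hC : Conjugation C) (x y : K) :
    C (x + y) = C x + C y := by
  simpa using hC.1 1 x y

theorem Conjugation.map_sub {C : K → K} (hC : Conjugation C) (x y : K) :
    C (x - y) = C x - C y :=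
  (AddMonoidHom.mk' C hC.map_add).map_sub x y

theorem Conjugation.involutive {C : K → K} (hC : Conjugation C) : Function.Involutive C :=
  hC.2.1

theorem CNormal.conj_mul_adjoint_conj [CompleteSpace K] {C : K → K} (hC : Function.Involutive C)
    {T : K →L[ℂ] K} (hT : CNormal C T) (x : K) :
    C (T (adjoint T (C x))) = adjoint T (T x) := by
  rw [← hT, hC, hC]

theorem isSelfAdjoint_adjoint_mul_self [CompleteSpace K] (T : K →L[ℂ] K) :
    IsSelfAdjoint (adjoint T * T) := by
  simpa only [star_eq_adjoint] using IsSelfAdjoint.star_mul_self T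

theorem isSelfAdjoint_mul_adjoint_self [CompleteSpace K] (T : K →L[ℂ] K) :
    IsSelfAdjoint (T * adjoint T) := by
  simpa only [star_eq_adjoint] using IsSelfAdjoint.mul_star_self T

end

theorem stmt_4_general {H : Type*} [NormedAddCommGroup H] [InnerProductSpace ℂ H] [CompleteSpace H]
    (C : H → H) (hC : Conjugation C)
    (T : H →L[ℂ] H) (hT : CNormal C T) :
    (∀ x, C (adjoint (adjoint T * T - T * adjoint T) (C x)) =
      -((adjoint T * T - T * adjoint T) x)) ∧
    (∀ x, adjoint (adjoint T * T + T * adjoint T) x =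
      C ((adjoint T * T + T * adjoint T) (C x))) := by
  have hswap := hT.conj_mul_adjoint_conj hC.involutive
  constructor
  · intro x
    rw [((isSelfAdjoint_adjoint_mul_self T).sub (isSelfAdjoint_mul_adjoint_self T)).adjoint_eq]
    simp only [sub_apply, mul_def, comp_apply]
    rw [hC.map_sub, hT x, hswap x, neg_sub]
  · intro x
    rw [((isSelfAdjoint_adjoint_mul_self T).add (isSelfAdjoint_mul_adjoint_self T)).adjoint_eq]
    simp only [add_apply, mul_def, comp_apply]
    rw [hC.map_add, hT x, hswap x, add_comm]

/-- If `T` is `C`-normal then `S₁ = T*T − TT*` is `C`-skew-symmetric (`C S₁* C = −S₁`)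
and `S₂ = T*T + TT*` is `C`-symmetric (`S₂* = C S₂ C`). -/
theorem stmt_4 {H : Type*} [NormedAddCommGroup H] [InnerProductSpace ℂ H] [CompleteSpace H]
    [SeparableSpace H]
    (C : H → H) (hC : Conjugation C)
    (T : H →L[ℂ] H) (hT : CNormal C T) :
    (∀ x, C (adjoint (adjoint T * T - T * adjoint T) (C x)) =
      -((adjoint T * T - T * adjoint T) x)) ∧
    (∀ x, adjoint (adjoint T * T + T * adjoint T) x =
      C ((adjoint T * T + T * adjoint T) (C x))) :=
  stmt_4_general C hC T hT
end

section
/- Let H be a separable complex Hilbert space, C a conjugation on H, and T a C-normal bounded linear operator on H that is a partial isometry (‖Tx‖ = ‖x‖ for all x ∈ (ker T)ᗮ). Then T = U ∘ P, where U is a C-normal unitary operator on H and P is the orthogonal projection onto (ker T)ᗮ. -/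
open scoped InnerProductSpace
open ContinuousLinearMap TopologicalSpace

/-!
A partial isometry `T` maps `(ker T)ᗮ` isometrically onto its range, which is therefore closed,
so `T` extends to a unitary `U = T + e ∘ P_{ker T}` as soon as there is an isometric isomorphism
`e : ker T ≃ (ran T)ᗮ = ker T*`. By `C`-normality, `T x = 0` forces `T T* (C x) = C T* T x = 0`,
and `T* y = 0` forces `T* T (C y) = C T T* y = 0`; hence the antiunitary `C` exchanges `ker T` and
`ker T*`, and it carries a Hilbert basis of the one to a Hilbert basis of the other, which gives
`e`. Finally every unitary is `C`-normal because `C` is an involution.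
-/

section PartialIsometry

variable {𝕜 E F : Type*} [RCLike 𝕜] [NormedAddCommGroup E] [InnerProductSpace 𝕜 E]
  [CompleteSpace E] [NormedAddCommGroup F] [InnerProductSpace 𝕜 F]

def IsPartialIsometry (T : E →L[𝕜] F) : Prop :=
  ∀ x ∈ T.kerᗮ, ‖T x‖ = ‖x‖

namespace ContinuousLinearMap

variable (T : E →L[𝕜] F)

theorem apply_starProjection_orthogonal_ker (x : E) : T (T.kerᗮ.starProjection x) = T x := by
  have hx : x - T.kerᗮ.starProjection x ∈ T.ker := by
    simpa only [Submodule.orthogonal_orthogonal] using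
      T.kerᗮ.sub_starProjection_mem_orthogonal x
  rwa [LinearMap.mem_ker, coe_coe, map_sub, sub_eq_zero, eq_comm] at hx

noncomputable def extendByKer (e : T.ker ≃ₗᵢ[𝕜] T.rangeᗮ) : E →L[𝕜] F :=
  T + T.rangeᗮ.subtypeL ∘L (e : T.ker →L[𝕜] T.rangeᗮ) ∘L T.ker.orthogonalProjectionOnto

variable (e : T.ker ≃ₗᵢ[𝕜] T.rangeᗮ)

theorem extendByKer_apply (x : E) :
    T.extendByKer e x = T x + e (T.ker.orthogonalProjectionOnto x) := rfl

theorem extendByKer_starProjection_orthogonal_ker (x : E) :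
    T.extendByKer e (T.kerᗮ.starProjection x) = T x := by
  rw [extendByKer_apply, Submodule.orthogonalProjectionOnto_apply_of_mem_orthogonal
    (Submodule.starProjection_apply_mem _ x), map_zero, ZeroMemClass.coe_zero, add_zero,
    apply_starProjection_orthogonal_ker]

theorem extendByKer_apply_coe (n : T.ker) : T.extendByKer e n = e n := by
  simp [extendByKer_apply]

end ContinuousLinearMap

namespace IsPartialIsometry

variable {T : E →L[𝕜] F} (hT : IsPartialIsometry T)
include hT

theorem isClosed_range : IsClosed (T.range : Set F) := by
  let Tk : T.kerᗮ →ₗᵢ[𝕜] F := ⟨T.toLinearMap ∘ₗ T.kerᗮ.subtype, fun x => hT x x.2⟩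
  have hrange : (T.range : Set F) = Set.range Tk := by
    ext y
    constructor
    · rintro ⟨x, rfl⟩
      exact ⟨T.kerᗮ.orthogonalProjectionOnto x, T.apply_starProjection_orthogonal_ker x⟩
    · rintro ⟨x, rfl⟩
      exact ⟨x, rfl⟩
  rw [hrange]
  exact Tk.isometry.isClosedEmbedding.isClosed_range

theorem norm_extendByKer (e : T.ker ≃ₗᵢ[𝕜] T.rangeᗮ) (x : E) :
    ‖T.extendByKer e x‖ = ‖x‖ := by
  have horth : ⟪T x, (e (T.ker.orthogonalProjectionOnto x) : F)⟫_𝕜 = 0 :=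
    Submodule.inner_right_of_mem_orthogonal (LinearMap.mem_range_self _ x) (e _).2
  have hTx : ‖T x‖ = ‖T.kerᗮ.orthogonalProjectionOnto x‖ := by
    rw [← T.apply_starProjection_orthogonal_ker x]
    exact hT _ (Submodule.starProjection_apply_mem _ x)
  have he : ‖(e (T.ker.orthogonalProjectionOnto x) : F)‖ = ‖T.ker.orthogonalProjectionOnto x‖ :=
    e.norm_map _
  have hsq : ‖T.extendByKer e x‖ ^ 2 = ‖x‖ ^ 2 := by
    rw [extendByKer_apply, sq, norm_add_sq_eq_norm_sq_add_norm_sq_of_inner_eq_zero _ _ horth,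
      Submodule.norm_sq_eq_add_norm_sq_projection x T.ker, hTx, he]
    ring
  exact (pow_left_inj₀ (norm_nonneg _) (norm_nonneg _) two_ne_zero).mp hsq

variable [CompleteSpace F]

theorem orthogonal_orthogonal_range : T.rangeᗮᗮ = T.range := by
  rw [Submodule.orthogonal_orthogonal_eq_closure]
  exact hT.isClosed_range.submodule_topologicalClosure_eq

theorem surjective_extendByKer (e : T.ker ≃ₗᵢ[𝕜] T.rangeᗮ) :
    Function.Surjective (T.extendByKer e) := by
  intro y
  obtain ⟨m, hm, r, hr, rfl⟩ := T.rangeᗮ.exists_add_mem_mem_orthogonal y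
  rw [hT.orthogonal_orthogonal_range] at hr
  obtain ⟨x, rfl⟩ := hr
  refine ⟨T.kerᗮ.starProjection x + e.symm ⟨m, hm⟩, ?_⟩
  rw [map_add, extendByKer_starProjection_orthogonal_ker, extendByKer_apply_coe,
    LinearIsometryEquiv.apply_symm_apply, add_comm]
  rfl

noncomputable def extendByKerEquiv (e : T.ker ≃ₗᵢ[𝕜] T.rangeᗮ) : E ≃ₗᵢ[𝕜] F :=
  .ofSurjective ⟨T.extendByKer e, hT.norm_extendByKer e⟩ (hT.surjective_extendByKer e)

end IsPartialIsometry

end PartialIsometry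

namespace Conjugation

variable {K : Type*} [NormedAddCommGroup K] [InnerProductSpace ℂ K] {C : K → K}
  (hC : Conjugation C)
include hC

theorem apply_apply (x : K) : C (C x) = x := hC.2.1 x

theorem inner_map_map (x y : K) : ⟪C x, C y⟫_ℂ = ⟪y, x⟫_ℂ := hC.2.2 x y

theorem map_zero : C 0 = 0 := by
  rw [← inner_self_eq_zero (𝕜 := ℂ), hC.inner_map_map, inner_zero_left]

theorem nonempty_linearIsometryEquiv {N M : Submodule ℂ K} [CompleteSpace N] [CompleteSpace M]
    (hNM : ∀ x ∈ N, C x ∈ M) (hMN : ∀ y ∈ M, C y ∈ N) : Nonempty (N ≃ₗᵢ[ℂ] M) := by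
  classical
  obtain ⟨ι, b, -⟩ := exists_hilbertBasis ℂ N
  let v : ι → M := fun i => ⟨C (b i), hNM _ (b i).2⟩
  have hv : Orthonormal ℂ v := by
    rw [orthonormal_iff_ite]
    intro i j
    change ⟪C (b i : K), C (b j : K)⟫_ℂ = _
    rw [hC.inner_map_map]
    change ⟪b j, b i⟫_ℂ = _
    simp only [orthonormal_iff_ite.mp b.orthonormal, eq_comm]
  have hsp : (Submodule.span ℂ (Set.range v))ᗮ = ⊥ := by
    refine (Submodule.eq_bot_iff _).mpr fun m hm => ?_
    have hCm : b.repr ⟨C m, hMN _ m.2⟩ = 0 := by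
      ext i
      have hvm : ⟪v i, m⟫_ℂ = 0 :=
        Submodule.inner_right_of_mem_orthogonal (Submodule.subset_span (Set.mem_range_self i)) hm
      change ⟪C (b i : K), (m : K)⟫_ℂ = 0 at hvm
      rw [b.repr_apply_apply]
      change ⟪(b i : K), C m⟫_ℂ = 0
      rw [← hC.inner_map_map, hC.apply_apply]
      exact inner_eq_zero_symm.mp hvm
    have hCm0 : C m = 0 := congrArg Subtype.val (b.repr.map_eq_zero_iff.mp hCm)
    rw [Subtype.ext_iff, ← hC.apply_apply m, hCm0, hC.map_zero, Submodule.coe_zero]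
  exact ⟨b.repr.trans (HilbertBasis.mkOfOrthogonalEqBot hv hsp).repr.symm⟩

end Conjugation

section CNormal

variable {K : Type*} [NormedAddCommGroup K] [InnerProductSpace ℂ K] [CompleteSpace K]
  {C : K → K}

theorem LinearIsometryEquiv.cNormal (hC : Function.Involutive C) (V : K ≃ₗᵢ[ℂ] K) :
    CNormal C (V : K →L[ℂ] K) := by
  intro x
  simp [hC x]

variable {T : K →L[ℂ] K}

theorem CNormal.apply_mem_ker_adjoint (hT : CNormal C T) (hC : Conjugation C) {x : K}
    (hx : x ∈ T.ker) : C x ∈ (adjoint T).ker := by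
  have hx : T x = 0 := hx
  rw [← ker_self_comp_adjoint, LinearMap.mem_ker, coe_coe, comp_apply, ← hT, hC.apply_apply,
    hx, map_zero, hC.map_zero]

theorem CNormal.apply_mem_ker (hT : CNormal C T) (hC : Conjugation C) {y : K}
    (hy : y ∈ (adjoint T).ker) : C y ∈ T.ker := by
  have hy : adjoint T y = 0 := hy
  rw [← ker_adjoint_comp_self, LinearMap.mem_ker, coe_coe, comp_apply,
    ← hC.apply_apply ((adjoint T) (T (C y))), hT, hy, map_zero, hC.map_zero]

end CNormal

theorem stmt_5_general {H : Type*} [NormedAddCommGroup H] [InnerProductSpace ℂ H] [CompleteSpace H]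
    (C : H → H) (hC : Conjugation C)
    (T : H →L[ℂ] H) (hT : CNormal C T)
    (hTpi : ∀ x ∈ (LinearMap.ker (T : H →ₗ[ℂ] H))ᗮ, ‖T x‖ = ‖x‖) :
    ∃ U : H →L[ℂ] H,
      adjoint U * U = 1 ∧ U * adjoint U = 1 ∧ CNormal C U ∧
      ∀ x, T x = U ((Submodule.orthogonalProjectionOnto (LinearMap.ker (T : H →ₗ[ℂ] H))ᗮ x : H)) := by
  have hTpi : IsPartialIsometry T := hTpi
  obtain ⟨e⟩ : Nonempty (T.ker ≃ₗᵢ[ℂ] T.rangeᗮ) := by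
    rw [T.orthogonal_range]
    exact hC.nonempty_linearIsometryEquiv (fun x hx => hT.apply_mem_ker_adjoint hC hx)
      (fun y hy => hT.apply_mem_ker hC hy)
  let V := hTpi.extendByKerEquiv e
  exact ⟨V, by ext; simp, by ext; simp, V.cNormal hC.apply_apply,
    fun x => (T.extendByKer_starProjection_orthogonal_ker e x).symm⟩

/-- A `C`-normal partial isometry `T` factors as `T = U ∘ P` with `U` a `C`-normal
unitary and `P` the orthogonal projection onto `(ker T)ᗮ`. -/
theorem stmt_5 {H : Type*} [NormedAddCommGroup H] [InnerProductSpace ℂ H] [CompleteSpace H]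
    [SeparableSpace H]
    (C : H → H) (hC : Conjugation C)
    (T : H →L[ℂ] H) (hT : CNormal C T)
    (hTpi : ∀ x ∈ (LinearMap.ker (T : H →ₗ[ℂ] H))ᗮ, ‖T x‖ = ‖x‖) :
    ∃ U : H →L[ℂ] H,
      adjoint U * U = 1 ∧ U * adjoint U = 1 ∧ CNormal C U ∧
      ∀ x, T x = U ((Submodule.orthogonalProjectionOnto (LinearMap.ker (T : H →ₗ[ℂ] H))ᗮ x : H)) :=
  stmt_5_general C hC T hT hTpi
end

section
/- Let H be a separable complex Hilbert space, C a conjugation on H, and T a bounded linear operator on H that is both C-normal and normal. Then C commutes with T*T, and for every continuous function f : ℝ → ℝ, C commutes with the operator f(T*T) obtained from the continuous functional calculus of the positive operator T*T: C ∘ f(T*T) = f(T*T) ∘ C. -/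
open scoped InnerProductSpace
open ContinuousLinearMap TopologicalSpace

/-- If `T` is `C`-normal and normal, then `C` commutes with `T*T` and with `f(T*T)`
for every continuous `f : ℝ → ℝ` (continuous functional calculus). -/
theorem stmt_9 {H : Type*} [NormedAddCommGroup H] [InnerProductSpace ℂ H] [CompleteSpace H]
    [SeparableSpace H]
    (C : H → H) (hC : Conjugation C)
    (T : H →L[ℂ] H) (hT : CNormal C T)
    (hnormal : adjoint T * T = T * adjoint T) :
    (∀ x, C ((adjoint T * T) x) = (adjoint T * T) (C x)) ∧
    ∀ f : ℝ → ℝ, Continuous f →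
      ∀ x, C (cfc f (adjoint T * T) x) = cfc f (adjoint T * T) (C x) := by
  obtain ⟨hlin, hinv, hip⟩ := hC
  set A := adjoint T * T with hAdef
  have hA : IsSelfAdjoint A := by
    rw [IsSelfAdjoint, star_mul, star_eq_adjoint, star_eq_adjoint, adjoint_adjoint]
  -- basic facts about C
  have hC0 : C 0 = 0 := by
    have h := hlin 1 0 0
    simp only [smul_zero, add_zero, map_one, one_smul] at h
    exact add_eq_left.mp h.symm
  have hadd : ∀ x y, C (x + y) = C x + C y := by
    intro x y
    have := hlin 1 x y
    simpa using this
  have hsub : ∀ x y, C (x - y) = C x - C y := by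
    intro x y
    have h := hlin (-1) y x
    simp only [map_neg, map_one, neg_smul, one_smul] at h
    rw [sub_eq_neg_add, h]
    abel
  have hsmulR : ∀ (r : ℝ) (x : H), C (r • x) = r • C x := by
    intro r x
    have := hlin (r : ℂ) x 0
    simp only [add_zero, hC0, Complex.conj_ofReal] at this
    rw [← Complex.coe_smul, this, Complex.coe_smul]
  have hnorm : ∀ x, ‖C x‖ = ‖x‖ := by
    intro x
    have h1 : ⟪C x, C x⟫_ℂ = ⟪x, x⟫_ℂ := hip x x
    have h2 : ((‖C x‖ : ℂ)) ^ 2 = ((‖x‖ : ℂ)) ^ 2 := by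
      rw [inner_self_eq_norm_sq_to_K, inner_self_eq_norm_sq_to_K] at h1
      exact h1
    have h3 : ‖C x‖ ^ 2 = ‖x‖ ^ 2 := by exact_mod_cast h2
    nlinarith [norm_nonneg (C x), norm_nonneg x]
  have hCcont : Continuous C := by
    have : Isometry C := by
      intro x y
      simp [edist_dist, dist_eq_norm, ← hsub, hnorm]
    exact this.continuous
  -- part 1
  have part1 : ∀ x, C (A x) = A (C x) := by
    intro x
    have h1 := hT (C x)
    rw [hinv x] at h1
    calc C (A x) = C (adjoint T (T x)) := rfl
      _ = T (adjoint T (C x)) := h1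
      _ = A (C x) := by rw [hnormal]; rfl
  refine ⟨part1, ?_⟩
  -- the commutant subalgebra
  let S : Subalgebra ℝ C(spectrum ℝ A, ℝ) :=
  { carrier := {g | ∀ x, C (cfcHom hA g x) = cfcHom hA g (C x)}
    mul_mem' := by
      intro g h hg hh x
      simp only [map_mul, ContinuousLinearMap.mul_apply]
      rw [hg ((cfcHom hA h) x), hh x]
    add_mem' := by
      intro g h hg hh x
      simp only [map_add, ContinuousLinearMap.add_apply]
      rw [hadd, hg x, hh x]
    algebraMap_mem' := by
      intro r x
      rw [AlgHomClass.commutes]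
      simp only [Algebra.algebraMap_eq_smul_one, ContinuousLinearMap.smul_apply,
        ContinuousLinearMap.one_apply]
      exact hsmulR r x }
  have hXmem : ((Polynomial.toContinuousMapOnAlgHom (spectrum ℝ A)) Polynomial.X) ∈ S := by
    have hid : ((Polynomial.toContinuousMapOnAlgHom (spectrum ℝ A)) Polynomial.X)
        = (ContinuousMap.id ℝ).restrict (spectrum ℝ A) := by
      ext z; simp
    intro x
    rw [hid, cfcHom_id hA]
    exact part1 x
  have hpoly : polynomialFunctions (spectrum ℝ A) ≤ S := by
    rw [polynomialFunctions.eq_adjoin_X]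
    exact Algebra.adjoin_le (Set.singleton_subset_iff.mpr hXmem)
  have hSclosed : IsClosed (S : Set C(spectrum ℝ A, ℝ)) := by
    have : (S : Set C(spectrum ℝ A, ℝ)) =
        ⋂ x : H, {g | C (cfcHom hA g x) = cfcHom hA g (C x)} := by
      ext g; simp [S, Set.mem_iInter]
    rw [this]
    refine isClosed_iInter fun x => isClosed_eq ?_ ?_
    · exact hCcont.comp ((ContinuousLinearMap.apply ℂ H x).continuous.comp
        (cfcHom_isClosedEmbedding hA).continuous)
    · exact (ContinuousLinearMap.apply ℂ H (C x)).continuous.comp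
        (cfcHom_isClosedEmbedding hA).continuous
  have htop : ∀ g : C(spectrum ℝ A, ℝ), g ∈ S := by
    intro g
    have h1 : (polynomialFunctions (spectrum ℝ A)).topologicalClosure = ⊤ :=
      ContinuousMap.subalgebra_topologicalClosure_eq_top_of_separatesPoints _
        (polynomialFunctions_separatesPoints _)
    have h2 : (polynomialFunctions (spectrum ℝ A)).topologicalClosure ≤ S := by
      intro y hy
      have : y ∈ closure (polynomialFunctions (spectrum ℝ A) : Set C(spectrum ℝ A, ℝ)) := hy
      exact hSclosed.closure_subset (closure_mono hpoly this)
    exact h2 (h1 ▸ Algebra.mem_top)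
  intro f hf x
  rw [cfc_apply f A hA hf.continuousOn]
  exact htop _ x
end

section
/- Let H be a separable complex Hilbert space, C a conjugation on H, and T a C-normal bounded linear operator on H. Then the anti-linear operator C ∘ T commutes with T*T, and for every continuous function f : ℝ → ℝ, C ∘ T commutes with the operator f(T*T) obtained from the continuous functional calculus of the positive operator T*T: (C ∘ T) ∘ f(T*T) = f(T*T) ∘ (C ∘ T). -/
open scoped InnerProductSpace
open ContinuousLinearMap TopologicalSpace

/-!
`T` intertwines `T*T` with `TT*`, and since `C² = 1`, `C`-normality says that `C` intertwines `TT*`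
with `T*T`; composing, `C ∘ T` commutes with `T*T`. To pass from `T*T` to `f(T*T)`, note that
for a bounded real-linear `L`, the pairs `(S, S')` with `L S = S' L` and `L S* = S'* L` form a
closed real star subalgebra of the product C⋆-algebra. It contains `(A, B)` whenever `L`
intertwines the selfadjoint operators `A` and `B`, hence also `f(A, B) = (f(A), f(B))`.
-/

/- Not found automatically: the `ℝ`-algebra structure on a product is not reducibly the one
obtained from its `ℂ`-algebra structure. -/
instance {A B : Type*} [CStarAlgebra A] [CStarAlgebra B] :
    ContinuousFunctionalCalculus ℝ (A × B) IsSelfAdjoint :=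
  IsSelfAdjoint.instContinuousFunctionalCalculus

section Intertwining

variable {E F : Type*} [NormedAddCommGroup E] [InnerProductSpace ℂ E] [CompleteSpace E]
  [NormedAddCommGroup F] [InnerProductSpace ℂ F] [CompleteSpace F]

def intertwiningStarSubalgebra (L : E →L[ℝ] F) :
    StarSubalgebra ℝ ((E →L[ℂ] E) × (F →L[ℂ] F)) where
  carrier := {S | ∀ x, L (S.1 x) = S.2 (L x) ∧ L (star S.1 x) = star S.2 (L x)}
  mul_mem' {S T} hS hT x := by
    simp only [Prod.fst_mul, Prod.snd_mul, star_mul, mul_apply_eq_comp, (hS _).1, (hT _).1,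
      (hS _).2, (hT _).2, and_self]
  add_mem' {S T} hS hT x := by
    simp only [Prod.fst_add, Prod.snd_add, star_add, add_apply, map_add, (hS x).1, (hT x).1,
      (hS x).2, (hT x).2, and_self]
  algebraMap_mem' r x := by
    simp [Algebra.algebraMap_eq_smul_one]
  star_mem' {S} hS x := by
    simpa only [Prod.fst_star, Prod.snd_star, star_star] using (hS x).symm

lemma isClosed_intertwiningStarSubalgebra (L : E →L[ℝ] F) :
    IsClosed (intertwiningStarSubalgebra L : Set ((E →L[ℂ] E) × (F →L[ℂ] F))) := by
  simp only [intertwiningStarSubalgebra, StarSubalgebra.coe_mk, Subalgebra.coe_mk,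
    Set.ofPred_forall, Set.ofPred_and]
  exact isClosed_iInter fun x => (isClosed_eq (by fun_prop) (by fun_prop)).inter
    (isClosed_eq (by fun_prop) (by fun_prop))

theorem apply_cfc_of_intertwining (L : E →L[ℝ] F) {A : E →L[ℂ] E} {B : F →L[ℂ] F}
    (hA : IsSelfAdjoint A) (hB : IsSelfAdjoint B) (hL : ∀ x, L (A x) = B (L x))
    (f : ℝ → ℝ) (hf : Continuous f) (x : E) :
    L (cfc f A x) = cfc f B (L x) := by
  have hAB : (A, B) ∈ intertwiningStarSubalgebra L := fun x => by
    simp only [hA.star_eq, hB.star_eq, hL, and_self]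
  have hcfc := cfc_mem (hs := isClosed_intertwiningStarSubalgebra L) f hAB
  rw [cfc_map_prod (S := ℝ) f A B
    (hab := show IsSelfAdjoint (A, B) from Prod.ext hA.star_eq hB.star_eq)] at hcfc
  exact (hcfc x).1

end Intertwining

namespace Conjugation

variable {H : Type*} [NormedAddCommGroup H] [InnerProductSpace ℂ H] {C : H → H}

lemma map_add_s10 (hC : Conjugation C) (x y : H) : C (x + y) = C x + C y := by
  simpa using hC.1 1 x y

lemma map_real_smul (hC : Conjugation C) (r : ℝ) (x : H) : C (r • x) = r • C x := by
  have h0 : C 0 = 0 := by simpa using hC.map_add_s10 0 0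
  simpa [h0] using hC.1 r x 0

lemma norm_map (hC : Conjugation C) (x : H) : ‖C x‖ = ‖x‖ := by
  rw [← sq_eq_sq₀ (norm_nonneg _) (norm_nonneg _), ← inner_self_eq_norm_sq (𝕜 := ℂ),
    ← inner_self_eq_norm_sq (𝕜 := ℂ), hC.2.2]

noncomputable def toRealCLM (hC : Conjugation C) : H →L[ℝ] H :=
  LinearMap.mkContinuous ⟨⟨C, hC.map_add_s10⟩, hC.map_real_smul⟩ 1 fun x => by simp [hC.norm_map]

@[simp]
lemma toRealCLM_apply (hC : Conjugation C) (x : H) : hC.toRealCLM x = C x := rfl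

end Conjugation

lemma CNormal.conj_apply_mul_adjoint {H : Type*} [NormedAddCommGroup H]
    [InnerProductSpace ℂ H] [CompleteSpace H] {C : H → H} {T : H →L[ℂ] H}
    (hT : CNormal C T) (hC : Conjugation C) (y : H) :
    C ((T * adjoint T) y) = (adjoint T * T) (C y) := by
  rw [mul_apply_eq_comp, ← hT, hC.2.1]
  rfl

theorem stmt_10_general {H : Type*} [NormedAddCommGroup H] [InnerProductSpace ℂ H] [CompleteSpace H]
    (C : H → H) (hC : Conjugation C)
    (T : H →L[ℂ] H) (hT : CNormal C T) :
    (∀ x, C (T ((adjoint T * T) x)) = (adjoint T * T) (C (T x))) ∧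
    ∀ f : ℝ → ℝ, Continuous f →
      ∀ x, C (T (cfc f (adjoint T * T) x)) = cfc f (adjoint T * T) (C (T x)) := by
  have hT_intertwines : ∀ x, T ((adjoint T * T) x) = (T * adjoint T) (T x) := fun _ => rfl
  have hC_intertwines := hT.conj_apply_mul_adjoint hC
  have h_sa : IsSelfAdjoint (adjoint T * T) := .star_mul_self T
  have h_sa' : IsSelfAdjoint (T * adjoint T) := .mul_star_self T
  refine ⟨fun x => by rw [hT_intertwines, hC_intertwines], fun f hf x => ?_⟩
  calc C (T (cfc f (adjoint T * T) x))
      = C (cfc f (T * adjoint T) (T x)) :=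
        congrArg C <|
          apply_cfc_of_intertwining (T.restrictScalars ℝ) h_sa h_sa' hT_intertwines f hf x
    _ = cfc f (adjoint T * T) (C (T x)) :=
        apply_cfc_of_intertwining hC.toRealCLM h_sa' h_sa hC_intertwines f hf (T x)

/-- If `T` is `C`-normal, then the anti-linear operator `C ∘ T` commutes with `T*T` and
with `f(T*T)` for every continuous `f : ℝ → ℝ` (continuous functional calculus). -/
theorem stmt_10 {H : Type*} [NormedAddCommGroup H] [InnerProductSpace ℂ H] [CompleteSpace H]
    [SeparableSpace H]
    (C : H → H) (hC : Conjugation C)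
    (T : H →L[ℂ] H) (hT : CNormal C T) :
    (∀ x, C (T ((adjoint T * T) x)) = (adjoint T * T) (C (T x))) ∧
    ∀ f : ℝ → ℝ, Continuous f →
      ∀ x, C (T (cfc f (adjoint T * T) x)) = cfc f (adjoint T * T) (C (T x)) :=
  stmt_10_general C hC T hT
end

section
/- Let H be a separable complex Hilbert space, C a conjugation on H, and T a C-normal bounded linear operator with Cartesian decomposition T = A + iB, where A = (T + CT*C)/2 is C-symmetric and B = (T − CT*C)/(2i) is C-skew-symmetric. With |X| = (X*X)^{1/2}, the following Loewner-order inequalities hold: (1/√2)·(|A| + |B|) ≤ |T| ≤ |A| + |B|, and moreover |T|² = |A|² + |B|² with |A| |B| = |B| |A|. -/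
open scoped InnerProductSpace
open ContinuousLinearMap TopologicalSpace

/-!
Put `S = C T* C`. `C`-normality says exactly that `S S* = T T*` and `S* S = T* T`, and
`A = (T + S)/2`, `B = (T - S)/(2i)`. Writing `N = T* T` and `X = T* S + S* T`, one gets
`4 A* A = 2N + X` and `4 B* B = 2N - X`, so `|A|² + |B|² = |T|²`, and `X` commutes with `N`
because `S S* = T T*`; hence `|A|²` and `|B|²` commute, and so do their square roots.
For commuting `|A|, |B|` the cross term `|A||B| + |B||A|` is positive, so
`|T|² ≤ (|A| + |B|)²`, while `(|A| + |B|)² ≤ (|A| + |B|)² + (|A| - |B|)² = 2|T|²` always.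
Both inequalities then survive taking square roots, since the square root is operator monotone.
-/

section CStarAlgebra

variable {𝓐 : Type*} [CStarAlgebra 𝓐] [PartialOrder 𝓐] [StarOrderedRing 𝓐] {a b t : 𝓐}

lemma le_of_mul_self_le_mul_self (ha : 0 ≤ a) (hb : 0 ≤ b) (h : a * a ≤ b * b) : a ≤ b := by
  simpa only [CFC.sqrt_mul_self a ha, CFC.sqrt_mul_self b hb] using CFC.sqrt_le_sqrt _ _ h

lemma Commute.of_mul_self_left (ha : 0 ≤ a) (h : Commute (a * a) b) : Commute a b := by
  have h' := h.cfc_nnreal NNReal.sqrt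
  rwa [← CFC.sqrt_eq_cfc, CFC.sqrt_mul_self a ha] at h'

lemma commute_of_commute_mul_self (ha : 0 ≤ a) (hb : 0 ≤ b) (h : Commute (a * a) (b * b)) :
    Commute a b :=
  ((h.of_mul_self_left ha).symm.of_mul_self_left hb).symm

lemma le_add_of_mul_self_eq_add (ha : 0 ≤ a) (hb : 0 ≤ b) (ht : 0 ≤ t) (hab : Commute a b)
    (h : t * t = a * a + b * b) : t ≤ a + b := by
  refine le_of_mul_self_le_mul_self ht (add_nonneg ha hb) ?_
  have hcross : 0 ≤ a * b + b * a := add_nonneg (hab.mul_nonneg ha hb) (hab.symm.mul_nonneg hb ha)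
  calc t * t ≤ t * t + (a * b + b * a) := le_add_of_nonneg_right hcross
    _ = (a + b) * (a + b) := by rw [h]; noncomm_ring

lemma inv_sqrt_two_smul_add_le_of_mul_self_eq_add (ha : 0 ≤ a) (hb : 0 ≤ b) (ht : 0 ≤ t)
    (h : t * t = a * a + b * b) : (Real.sqrt 2)⁻¹ • (a + b) ≤ t := by
  refine le_of_mul_self_le_mul_self (smul_nonneg (by positivity) (add_nonneg ha hb)) ht ?_
  have hdiff : 0 ≤ (a - b) * (a - b) := by
    simpa only [((IsSelfAdjoint.of_nonneg ha).sub (.of_nonneg hb)).star_eq]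
      using star_mul_self_nonneg (a - b)
  have hsqrt : (Real.sqrt 2)⁻¹ * (Real.sqrt 2)⁻¹ = (2 : ℝ)⁻¹ := by
    rw [← mul_inv, Real.mul_self_sqrt zero_le_two]
  calc (Real.sqrt 2)⁻¹ • (a + b) * (Real.sqrt 2)⁻¹ • (a + b)
      = (2 : ℝ)⁻¹ • ((a + b) * (a + b)) := by rw [smul_mul_smul_comm, hsqrt]
    _ ≤ (2 : ℝ)⁻¹ • ((a + b) * (a + b) + (a - b) * (a - b)) := by
      gcongr; exact le_add_of_nonneg_right hdiff
    _ = t * t := by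
      rw [h, show (a + b) * (a + b) + (a - b) * (a - b) = (2 : ℝ) • (a * a + b * b) by
        rw [two_smul]; noncomm_ring, smul_smul, inv_mul_cancel₀ two_ne_zero, one_smul]

end CStarAlgebra

section CartesianDecomposition

variable {R : Type*} [Ring R] [StarRing R] {T S : R}

lemma commute_cross_star_mul_self (h₁ : S * star S = T * star T) (h₂ : star S * S = star T * T) :
    Commute (star T * S + star S * T) (star T * T) := by
  refine Commute.add_left ?_ ?_
  · calc star T * S * (star T * T) = star T * (S * star S) * S := by rw [← h₂]; noncomm_ring
      _ = star T * T * (star T * S) := by rw [h₁]; noncomm_ring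
  · calc star S * T * (star T * T) = star S * (T * star T) * T := by noncomm_ring
      _ = star T * T * (star S * T) := by rw [← h₁, ← h₂]; noncomm_ring

variable [Algebra ℂ R] [StarModule ℂ R]

variable (T S) in
lemma star_mul_self_inv_two_smul_add :
    star ((2 : ℂ)⁻¹ • (T + S)) * ((2 : ℂ)⁻¹ • (T + S))
      = (4 : ℂ)⁻¹ • (star T * T + star S * S + (star T * S + star S * T)) := by
  have hc : star (2 : ℂ)⁻¹ * (2 : ℂ)⁻¹ = (4 : ℂ)⁻¹ := by
    rw [Complex.star_def, map_inv₀, map_ofNat]; norm_num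
  rw [star_smul, star_add, smul_mul_smul_comm, hc]
  noncomm_ring

variable (T S) in
lemma star_mul_self_inv_two_I_smul_sub :
    star ((2 * Complex.I)⁻¹ • (T - S)) * ((2 * Complex.I)⁻¹ • (T - S))
      = (4 : ℂ)⁻¹ • (star T * T + star S * S - (star T * S + star S * T)) := by
  have hc : star (2 * Complex.I)⁻¹ * (2 * Complex.I)⁻¹ = (4 : ℂ)⁻¹ := by
    rw [Complex.star_def, mul_inv, Complex.inv_I, map_mul, map_inv₀, map_ofNat, map_neg,
      Complex.conj_I]
    ring_nf; rw [Complex.I_sq]; norm_num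
  rw [star_smul, star_sub, smul_mul_smul_comm, hc]
  noncomm_ring

lemma star_mul_self_add_star_mul_self_of_star_mul_self_eq (h : star S * S = star T * T) :
    star ((2 : ℂ)⁻¹ • (T + S)) * ((2 : ℂ)⁻¹ • (T + S))
      + star ((2 * Complex.I)⁻¹ • (T - S)) * ((2 * Complex.I)⁻¹ • (T - S)) = star T * T := by
  rw [star_mul_self_inv_two_smul_add, star_mul_self_inv_two_I_smul_sub, h]
  match_scalars <;> norm_num

lemma commute_star_mul_self_cartesian (h₁ : S * star S = T * star T)
    (h₂ : star S * S = star T * T) :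
    Commute (star ((2 : ℂ)⁻¹ • (T + S)) * ((2 : ℂ)⁻¹ • (T + S)))
      (star ((2 * Complex.I)⁻¹ • (T - S)) * ((2 * Complex.I)⁻¹ • (T - S))) := by
  rw [star_mul_self_inv_two_smul_add, star_mul_self_inv_two_I_smul_sub, h₂]
  have hX : Commute (star T * T + star T * T) (star T * S + star S * T) :=
    (commute_cross_star_mul_self h₁ h₂).symm.add_left (commute_cross_star_mul_self h₁ h₂).symm
  exact (((Commute.refl _).sub_right hX).add_left (hX.symm.sub_right (.refl _))).smul_left _
    |>.smul_right _

end CartesianDecomposition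

section Conjugation

variable {H : Type*} [NormedAddCommGroup H] [InnerProductSpace ℂ H] [CompleteSpace H]
  {C : H → H} {T S : H →L[ℂ] H}

lemma Conjugation.adjoint_apply_of_apply_eq (hC : Conjugation C)
    (hS : ∀ x, S x = C (adjoint T (C x))) (x : H) : adjoint S x = C (T (C x)) := by
  obtain ⟨-, hCC, hCinner⟩ := hC
  refine ext_inner_left ℂ fun y => ?_
  calc ⟪y, adjoint S x⟫_ℂ = ⟪C (adjoint T (C y)), C (C x)⟫_ℂ := by
        rw [adjoint_inner_right, hS y, hCC x]
    _ = ⟪T (C x), C y⟫_ℂ := by rw [hCinner, adjoint_inner_right]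
    _ = ⟪y, C (T (C x))⟫_ℂ := by rw [← hCinner, hCC]

lemma CNormal.mul_adjoint_eq (hC : Conjugation C) (hT : CNormal C T)
    (hS : ∀ x, S x = C (adjoint T (C x))) : S * adjoint S = T * adjoint T := by
  ext x
  show S (adjoint S x) = T (adjoint T x)
  rw [hC.adjoint_apply_of_apply_eq hS, hS, hC.2.1, hT]

lemma CNormal.adjoint_mul_eq (hC : Conjugation C) (hT : CNormal C T)
    (hS : ∀ x, S x = C (adjoint T (C x))) : adjoint S * S = adjoint T * T := by
  ext x
  have h := congrArg C (hT (C x))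
  rw [hC.2.1, hC.2.1] at h
  show adjoint S (S x) = adjoint T (T x)
  rw [hC.adjoint_apply_of_apply_eq hS, hS, hC.2.1, h]

end Conjugation

theorem stmt_15_general {H : Type*} [NormedAddCommGroup H] [InnerProductSpace ℂ H] [CompleteSpace H]
    (C : H → H) (hC : Conjugation C)
    (T A B : H →L[ℂ] H) (hT : CNormal C T)
    (hA : ∀ x, A x = (2 : ℂ)⁻¹ • (T x + C (adjoint T (C x))))
    (hB : ∀ x, B x = (2 * Complex.I)⁻¹ • (T x - C (adjoint T (C x))))
    (PA PB PT : H →L[ℂ] H)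
    (hPA : PA.IsPositive) (hPB : PB.IsPositive) (hPT : PT.IsPositive)
    (hPA2 : PA * PA = adjoint A * A) (hPB2 : PB * PB = adjoint B * B)
    (hPT2 : PT * PT = adjoint T * T) :
    (PT - (Real.sqrt 2)⁻¹ • (PA + PB)).IsPositive ∧
    ((PA + PB) - PT).IsPositive ∧
    PT * PT = PA * PA + PB * PB ∧
    PA * PB = PB * PA := by
  set S : H →L[ℂ] H := (2 : ℂ) • A - T
  have hS : ∀ x, S x = C (adjoint T (C x)) := fun x => by
    simp only [S, sub_apply, smul_apply, hA x, smul_smul]; norm_num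
  have hA' : A = (2 : ℂ)⁻¹ • (T + S) := by simp only [S]; module
  have hB' : B = (2 * Complex.I)⁻¹ • (T - S) := by ext x; simp [hB x, hS x]
  have h₁ := hT.mul_adjoint_eq hC hS
  have h₂ := hT.adjoint_mul_eq hC hS
  simp only [← star_eq_adjoint, hA', hB'] at h₁ h₂ hPA2 hPB2 hPT2
  have hsq : PT * PT = PA * PA + PB * PB := by
    rw [hPT2, hPA2, hPB2, star_mul_self_add_star_mul_self_of_star_mul_self_eq h₂]
  have hPA0 := (nonneg_iff_isPositive PA).mpr hPA
  have hPB0 := (nonneg_iff_isPositive PB).mpr hPB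
  have hPT0 := (nonneg_iff_isPositive PT).mpr hPT
  have hcomm : Commute PA PB := commute_of_commute_mul_self hPA0 hPB0 <| by
    rw [hPA2, hPB2]; exact commute_star_mul_self_cartesian h₁ h₂
  exact ⟨inv_sqrt_two_smul_add_le_of_mul_self_eq_add hPA0 hPB0 hPT0 hsq,
    le_add_of_mul_self_eq_add hPA0 hPB0 hPT0 hcomm hsq, hsq, hcomm.eq⟩

/-- Singular-value/Loewner inequalities for the Cartesian decomposition `T = A + iB` of a
`C`-normal operator: with `PA = |A|`, `PB = |B|`, `PT = |T|` the positive square roots,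
`(1/√2)(|A| + |B|) ≤ |T| ≤ |A| + |B|`, `|T|² = |A|² + |B|²`, and `|A||B| = |B||A|`. -/
theorem stmt_15 {H : Type*} [NormedAddCommGroup H] [InnerProductSpace ℂ H] [CompleteSpace H]
    [SeparableSpace H]
    (C : H → H) (hC : Conjugation C)
    (T A B : H →L[ℂ] H) (hT : CNormal C T)
    (hA : ∀ x, A x = (2 : ℂ)⁻¹ • (T x + C (adjoint T (C x))))
    (hB : ∀ x, B x = (2 * Complex.I)⁻¹ • (T x - C (adjoint T (C x))))
    (PA PB PT : H →L[ℂ] H)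
    (hPA : PA.IsPositive) (hPB : PB.IsPositive) (hPT : PT.IsPositive)
    (hPA2 : PA * PA = adjoint A * A) (hPB2 : PB * PB = adjoint B * B)
    (hPT2 : PT * PT = adjoint T * T) :
    (PT - (Real.sqrt 2)⁻¹ • (PA + PB)).IsPositive ∧
    ((PA + PB) - PT).IsPositive ∧
    PT * PT = PA * PA + PB * PB ∧
    PA * PB = PB * PA :=
  stmt_15_general C hC T A B hT hA hB PA PB PT hPA hPB hPT hPA2 hPB2 hPT2
end

section
/- Let H be a separable complex Hilbert space, C a conjugation on H, and T a C-normal bounded linear operator with Cartesian decomposition T = A + iB, where A = (T + CT*C)/2 is C-symmetric and B = (T − CT*C)/(2i) is C-skew-symmetric. Then the self-commutator satisfies ‖T*T − TT*‖ ≤ 2‖A‖·min(‖A − A*‖, ‖A + A*‖) + 2‖B‖·min(‖B − B*‖, ‖B + B*‖). -/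
open scoped InnerProductSpace
open ContinuousLinearMap TopologicalSpace

/-!
Put `K = A - iB`. Pointwise `K = C T* C`, hence `K* = C T C`, so `C`-normality says
`T T* = K K*` and, conjugated by `C`, `T* T = K* K`. In the sum of the self-commutators of
`T = A + iB` and `K = A - iB` the cross terms cancel, which gives
`T* T - T T* = (A* A - A A*) + (B* B - B B*)`. Finally `A* A - A A* = (A* ∓ A) A - A (A* ∓ A)`
has norm at most `2 ‖A‖ ‖A ∓ A*‖`.
-/

open Complex

section Commutator

variable {R : Type*} [NormedRing R]

theorem norm_commutator_le (X D : R) : ‖D * X - X * D‖ ≤ 2 * ‖X‖ * ‖D‖ :=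
  calc ‖D * X - X * D‖ ≤ ‖D‖ * ‖X‖ + ‖X‖ * ‖D‖ :=
        (norm_sub_le _ _).trans (add_le_add (norm_mul_le _ _) (norm_mul_le _ _))
    _ = 2 * ‖X‖ * ‖D‖ := by ring

theorem norm_commutator_le_mul_min (X Y : R) :
    ‖Y * X - X * Y‖ ≤ 2 * ‖X‖ * min ‖X - Y‖ ‖X + Y‖ := by
  have h_sub : Y * X - X * Y = (Y - X) * X - X * (Y - X) := by noncomm_ring
  have h_add : Y * X - X * Y = (X + Y) * X - X * (X + Y) := by noncomm_ring
  rw [mul_min_of_nonneg _ _ (by positivity)]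
  refine le_min ?_ ?_
  · simpa only [h_sub, norm_sub_rev Y X] using norm_commutator_le X (Y - X)
  · simpa only [h_add] using norm_commutator_le X (X + Y)

end Commutator

theorem selfCommutator_add_I_smul_add_selfCommutator_sub_I_smul {R : Type*} [Ring R]
    [StarRing R] [Algebra ℂ R] [StarModule ℂ R] (A B : R) :
    (star (A + I • B) * (A + I • B) - (A + I • B) * star (A + I • B)) +
      (star (A - I • B) * (A - I • B) - (A - I • B) * star (A - I • B)) =
      (2 : ℂ) • ((star A * A - A * star A) + (star B * B - B * star B)) := by
  simp only [star_add, star_sub, star_smul, Complex.star_def, Complex.conj_I]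
  simp only [add_mul, mul_add, sub_mul, mul_sub, smul_mul_assoc, mul_smul_comm]
  match_scalars <;> ring_nf <;> simp [I_sq]

namespace Conjugation

variable {E : Type*} [NormedAddCommGroup E] [InnerProductSpace ℂ E] {C : E → E}

theorem inner_apply_left (hC : Conjugation C) (x y : E) : ⟪C x, y⟫_ℂ = ⟪C y, x⟫_ℂ := by
  rw [← hC.2.1 y, hC.2.2, hC.2.1]

theorem adjoint_apply_of_apply [CompleteSpace E] (hC : Conjugation C) {S K : E →L[ℂ] E}
    (hK : ∀ x, K x = C (S (C x))) (x : E) : adjoint K x = C (adjoint S (C x)) := by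
  refine ext_inner_left ℂ fun y => ?_
  rw [adjoint_inner_right, hK, hC.inner_apply_left, ← adjoint_inner_left]
  simpa only [hC.2.1] using hC.2.2 (C (adjoint S (C x))) y

end Conjugation

namespace CNormal

variable {E : Type*} [NormedAddCommGroup E] [InnerProductSpace ℂ E] [CompleteSpace E]
  {C : E → E} {T K : E →L[ℂ] E}

theorem mul_adjoint_eq_s17 (hC : Conjugation C) (hT : CNormal C T)
    (hK : ∀ x, K x = C (adjoint T (C x))) : T * adjoint T = K * adjoint K := by
  ext x
  have hK' := hC.adjoint_apply_of_apply hK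
  simp only [mul_apply_eq_comp, hK, hK', adjoint_adjoint, hC.2.1, hT x]

theorem adjoint_mul_eq_s17 (hC : Conjugation C) (hT : CNormal C T)
    (hK : ∀ x, K x = C (adjoint T (C x))) : adjoint T * T = adjoint K * K := by
  ext x
  have hK' := hC.adjoint_apply_of_apply hK
  simp only [mul_apply_eq_comp, hK, hK', adjoint_adjoint, hC.2.1]
  rw [← hT (C x), hC.2.1, hC.2.1]

end CNormal

theorem stmt_17_general {H : Type*} [NormedAddCommGroup H] [InnerProductSpace ℂ H] [CompleteSpace H]
    (C : H → H) (hC : Conjugation C)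
    (T A B : H →L[ℂ] H) (hT : CNormal C T)
    (hA : ∀ x, A x = (2 : ℂ)⁻¹ • (T x + C (adjoint T (C x))))
    (hB : ∀ x, B x = (2 * Complex.I)⁻¹ • (T x - C (adjoint T (C x)))) :
    ‖adjoint T * T - T * adjoint T‖ ≤
      2 * ‖A‖ * min ‖A - adjoint A‖ ‖A + adjoint A‖ +
      2 * ‖B‖ * min ‖B - adjoint B‖ ‖B + adjoint B‖ := by
  have hT_eq : T = A + I • B := by
    ext x
    rw [add_apply, smul_apply, hA, hB]
    match_scalars <;> field_simp <;> ring
  have hK : ∀ x, (A - I • B) x = C (adjoint T (C x)) := by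
    intro x
    simp only [sub_apply, smul_apply, hA, hB]
    match_scalars <;> field_simp <;> ring
  have h_comm : adjoint T * T - T * adjoint T =
      (adjoint A * A - A * adjoint A) + (adjoint B * B - B * adjoint B) := by
    have h := selfCommutator_add_I_smul_add_selfCommutator_sub_I_smul A B
    simp only [star_eq_adjoint, ← hT_eq, ← hT.adjoint_mul_eq_s17 hC hK,
      ← hT.mul_adjoint_eq_s17 hC hK, ← two_smul ℂ] at h
    exact smul_right_injective _ two_ne_zero h
  calc ‖adjoint T * T - T * adjoint T‖
      ≤ ‖adjoint A * A - A * adjoint A‖ + ‖adjoint B * B - B * adjoint B‖ := by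
        rw [h_comm]; exact norm_add_le _ _
    _ ≤ _ := add_le_add (norm_commutator_le_mul_min A _) (norm_commutator_le_mul_min B _)

/-- Self-commutator norm inequality for a `C`-normal operator `T` with Cartesian
decomposition `T = A + iB`:
`‖T*T − TT*‖ ≤ 2‖A‖ min(‖A − A*‖, ‖A + A*‖) + 2‖B‖ min(‖B − B*‖, ‖B + B*‖)`. -/
theorem stmt_17 {H : Type*} [NormedAddCommGroup H] [InnerProductSpace ℂ H] [CompleteSpace H]
    [SeparableSpace H]
    (C : H → H) (hC : Conjugation C)
    (T A B : H →L[ℂ] H) (hT : CNormal C T)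
    (hA : ∀ x, A x = (2 : ℂ)⁻¹ • (T x + C (adjoint T (C x))))
    (hB : ∀ x, B x = (2 * Complex.I)⁻¹ • (T x - C (adjoint T (C x)))) :
    ‖adjoint T * T - T * adjoint T‖ ≤
      2 * ‖A‖ * min ‖A - adjoint A‖ ‖A + adjoint A‖ +
      2 * ‖B‖ * min ‖B - adjoint B‖ ‖B + adjoint B‖ :=
  stmt_17_general C hC T A B hT hA hB
end
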